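/- arXiv:math/0602406 — 5 statements merged into one kernel-verified Lean document; each statement's English description precedes it below -/
import Mathlib

section
/- Commutator lemma (generalization of Rajchman's theorem, coefficient form). Let c : ℤ → ℂ with c(k) → 0 as |k| → ∞, and let g : ℤ → ℂ satisfy Σ_{p∈ℤ} |p|·|g(p)| < ∞. Then lim_{N→∞} [ Σ_{l : |l| ≤ N} | Σ_{k : |k| > N} c(k) g(l−k) | + Σ_{l : |l| > N} | Σ_{k : |k| ≤ N} c(k) g(l−k) | ] = 0. -/
/-!
Both blocks of the commutator are convolutions `∑ c k g (l - k)` in which one of `k`, `l` ranges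
inside `[-N, N]` and the other outside. Exchanging the order of summation (in `ℝ≥0∞`, so that no
summability has to be tracked) bounds the whole expression by `∑ p, ‖g p‖ * V N p`, where `V N p`
sums `‖c k‖` over the `k` for which exactly one of `k`, `k + p` lies in `[-N, N]`. Such `k` lie in
the shell `N - |p| < |k| ≤ N + |p|` of at most `4 |p|` points, so `V N p ≤ 4 |p| sup ‖c‖`, and
`V N p → 0` as `N → ∞` because `c` vanishes at infinity. Dominated convergence against
`∑ p, |p| ‖g p‖ < ∞` concludes.
-/

noncomputable section

open Filter Topology
open scoped ENNReal

namespace CommutatorLemma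

theorem enorm_mul_le_mul {R : Type*} [NonUnitalSeminormedRing R] (x y : R) :
    ‖x * y‖ₑ ≤ ‖x‖ₑ * ‖y‖ₑ := by
  simpa [enorm] using ENNReal.coe_le_coe.2 (nnnorm_mul_le x y)

theorem ENNReal.ofReal_tsum_le_tsum_ofReal {ι : Type*} {f : ι → ℝ} (hf : ∀ i, 0 ≤ f i) :
    ENNReal.ofReal (∑' i, f i) ≤ ∑' i, ENNReal.ofReal (f i) := by
  by_cases h : Summable f
  · exact (ENNReal.ofReal_tsum_of_nonneg hf h).le
  · simp [tsum_eq_zero_of_not_summable h]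

theorem tendsto_nhds_zero_of_ofReal_le {ι : Type*} {l : Filter ι} {f : ι → ℝ} {b : ι → ℝ≥0∞}
    (hf : ∀ i, 0 ≤ f i) (hfb : ∀ i, ENNReal.ofReal (f i) ≤ b i) (hb : Tendsto b l (𝓝 0)) :
    Tendsto f l (𝓝 0) := by
  have h : Tendsto (fun i => ENNReal.ofReal (f i)) l (𝓝 0) :=
    tendsto_of_tendsto_of_tendsto_of_le_of_le tendsto_const_nhds hb (fun _ => zero_le) hfb
  simpa [Function.comp_def, ENNReal.toReal_ofReal (hf _)] using
    (ENNReal.tendsto_toReal ENNReal.zero_ne_top).comp h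

theorem ENNReal.tendsto_tsum_of_dominated_convergence {α : Type*} {F : ℕ → α → ℝ≥0∞}
    {f : α → ℝ≥0∞} (bound : α → ℝ≥0∞) (h_bound : ∀ n a, F n a ≤ bound a)
    (h_fin : ∑' a, bound a ≠ ∞) (h_lim : ∀ a, Tendsto (fun n => F n a) atTop (𝓝 (f a))) :
    Tendsto (fun n => ∑' a, F n a) atTop (𝓝 (∑' a, f a)) := by
  let _ : MeasurableSpace α := ⊤
  simp only [← MeasureTheory.lintegral_count]
  exact MeasureTheory.tendsto_lintegral_of_dominated_convergence bound
    (fun _ => measurable_from_top) (fun n => Eventually.of_forall (h_bound n))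
    (by rwa [MeasureTheory.lintegral_count]) (Eventually.of_forall h_lim)

section Convolution

variable {G R : Type*} [AddCommGroup G] [NonUnitalNormedRing R]

theorem tsum_enorm_tsum_mul_sub_le (A B : Set G) (a b : G → R) :
    ∑' l : A, ‖∑' k : B, a k * b (l - k)‖ₑ ≤
      ∑' p, ‖b p‖ₑ * ∑' k, {k ∈ B | k + p ∈ A}.indicator (‖a ·‖ₑ) k := by
  classical
  calc ∑' l : A, ‖∑' k : B, a k * b (l - k)‖ₑ
      ≤ ∑' l : A, ∑' k : B, ‖a k‖ₑ * ‖b (l - k)‖ₑ :=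
        ENNReal.tsum_le_tsum fun l => enorm_tsum_le_tsum_enorm.trans <|
          ENNReal.tsum_le_tsum fun k => enorm_mul_le_mul _ _
    _ = ∑' l, ∑' k, if l ∈ A ∧ k ∈ B then ‖a k‖ₑ * ‖b (l - k)‖ₑ else 0 := by
        rw [tsum_subtype A (fun l => ∑' k : B, ‖a k‖ₑ * ‖b (l - k)‖ₑ)]
        congr 1; ext l
        by_cases hl : l ∈ A
        · simp [hl, tsum_subtype B (fun k => ‖a k‖ₑ * ‖b (l - k)‖ₑ), Set.indicator_apply]
        · simp [hl]
    _ = ∑' k, ∑' p, if k + p ∈ A ∧ k ∈ B then ‖a k‖ₑ * ‖b p‖ₑ else 0 := by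
        rw [ENNReal.tsum_comm]
        congr 1; ext k
        rw [← (Equiv.addLeft k).tsum_eq]
        simp
    _ = _ := by
        rw [ENNReal.tsum_comm]
        congr 1; ext p
        rw [← ENNReal.tsum_mul_left]
        congr 1; ext k
        by_cases hk : k + p ∈ A ∧ k ∈ B <;> simp_all [mul_comm, and_comm]

end Convolution

def shell (N r : ℕ) : Set ℤ := {k | (N : ℤ) - r < |k| ∧ |k| ≤ N + r}

/-- The sum of `f` over `shell N r`, whose points are `±(N + 1 - r + i)` for `i < 2 * r`. -/
def shellSum (f : ℤ → ℝ≥0∞) (N r : ℕ) : ℝ≥0∞ :=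
  ∑ i ∈ Finset.range (2 * r), (f ((N : ℤ) + 1 - r + i) + f (-((N : ℤ) + 1 - r + i)))

theorem tsum_indicator_shell_le_shellSum (f : ℤ → ℝ≥0∞) (N r : ℕ) :
    ∑' k, (shell N r).indicator f k ≤ shellSum f N r := by
  classical
  set m : ℕ → ℤ := fun i => (N : ℤ) + 1 - r + i
  have hpt (k : ℤ) : (shell N r).indicator f k ≤
      ∑ i ∈ Finset.range (2 * r), ((if k = m i then f k else 0) + if k = -m i then f k else 0) := by
    by_cases hk : k ∈ shell N r
    · rw [Set.indicator_of_mem hk]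
      obtain ⟨hlow, hhigh⟩ := hk
      have hi : (|k| - (N + 1 - r)).toNat ∈ Finset.range (2 * r) := by
        simp only [Finset.mem_range]; omega
      have hmi : m (|k| - (N + 1 - r)).toNat = |k| := by simp only [m]; omega
      refine le_trans ?_ (Finset.single_le_sum (fun _ _ => zero_le) hi)
      rw [hmi]
      rcases abs_choice k with hk' | hk' <;> rw [hk'] <;> simp
    · simp [Set.indicator_of_notMem hk]
  calc _ ≤ ∑' k, ∑ i ∈ Finset.range (2 * r),
          ((if k = m i then f k else 0) + if k = -m i then f k else 0) := ENNReal.tsum_le_tsum hpt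
    _ = shellSum f N r := by
        rw [Summable.tsum_finsetSum fun _ _ => ENNReal.summable]
        simp [shellSum, ENNReal.tsum_add, m]

theorem shellSum_le (f : ℤ → ℝ≥0∞) (N r : ℕ) {M : ℝ≥0∞} (hM : ∀ k, f k ≤ M) :
    shellSum f N r ≤ 4 * r * M := by
  calc shellSum f N r ≤ (Finset.range (2 * r)).card • (M + M) :=
        Finset.sum_le_card_nsmul _ _ _ fun _ _ => add_le_add (hM _) (hM _)
    _ = 4 * r * M := by simp [two_mul]; ring

theorem tendsto_shellSum {f : ℤ → ℝ≥0∞} (hf : Tendsto f cofinite (𝓝 0)) (r : ℕ) :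
    Tendsto (fun N => shellSum f N r) atTop (𝓝 0) := by
  have hshift (i : ℕ) : Tendsto (fun N : ℕ => (N : ℤ) + 1 - r + i) atTop atTop := by
    simp only [add_sub_assoc, add_assoc]
    exact tendsto_atTop_add_const_right _ _ tendsto_natCast_atTop_atTop
  simpa only [shellSum, Function.comp_def, add_zero, Finset.sum_const_zero] using
    tendsto_finsetSum (Finset.range (2 * r)) fun i _ =>
    (hf.comp ((hshift i).mono_right atTop_le_cofinite)).add
      (hf.comp ((tendsto_neg_atTop_atBot.comp (hshift i)).mono_right atBot_le_cofinite))

theorem mem_shell_of_crossing {N : ℕ} {k p : ℤ}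
    (h : (|k| ≤ N ∧ N < |k + p|) ∨ (N < |k| ∧ |k + p| ≤ N)) : k ∈ shell N p.natAbs := by
  have h₁ := abs_add_le k p
  have h₂ : |k| ≤ |k + p| + |p| := by simpa using abs_sub (k + p) p
  rw [shell, Set.mem_ofPred_eq, Int.natCast_natAbs]
  constructor <;> rcases h with h | h <;> linarith [abs_nonneg p]

theorem tsum_crossing_le_shellSum (f : ℤ → ℝ≥0∞) (N : ℕ) (p : ℤ) :
    ∑' k, {k ∈ {k : ℤ | (N : ℤ) < |k|} | k + p ∈ (Finset.Icc (-(N : ℤ)) N : Set ℤ)}.indicator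
        f k +
      ∑' k, {k ∈ (Finset.Icc (-(N : ℤ)) N : Set ℤ) | k + p ∈ {l : ℤ | (N : ℤ) < |l|}}.indicator
        f k
      ≤ shellSum f N p.natAbs := by
  rw [← ENNReal.tsum_add]
  refine le_trans (ENNReal.tsum_le_tsum fun k => ?_) (tsum_indicator_shell_le_shellSum f N _)
  simp only [Set.indicator_apply, Finset.coe_Icc, Set.mem_ofPred_eq, Set.mem_Icc, ← abs_le]
  by_cases hout : (N : ℤ) < |k| ∧ |k + p| ≤ N
  · have hin : ¬(|k| ≤ N ∧ (N : ℤ) < |k + p|) := fun h => by linarith [h.1, hout.1]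
    rw [if_pos hout, if_neg hin, Set.indicator_of_mem (mem_shell_of_crossing (Or.inr hout)),
      add_zero]
  · by_cases hin : |k| ≤ N ∧ (N : ℤ) < |k + p|
    · rw [if_neg hout, if_pos hin, Set.indicator_of_mem (mem_shell_of_crossing (Or.inl hin)),
        zero_add]
    · rw [if_neg hout, if_neg hin, add_zero]
      exact zero_le

section CommutatorNorm

variable {R : Type*} [NonUnitalNormedRing R]

/-- `‖[S_N, γ] F‖_A` in terms of the coefficients `c` of `F` and `g` of `γ`. -/
def commutatorNorm (c g : ℤ → R) (N : ℕ) : ℝ :=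
  (∑ l ∈ Finset.Icc (-(N : ℤ)) (N : ℤ),
      ‖∑' k : {k : ℤ // (N : ℤ) < |k|}, c k.val * g (l - k.val)‖) +
  (∑' l : {l : ℤ // (N : ℤ) < |l|},
      ‖∑ k ∈ Finset.Icc (-(N : ℤ)) (N : ℤ), c k * g (l.val - k)‖)

theorem commutatorNorm_nonneg (c g : ℤ → R) (N : ℕ) : 0 ≤ commutatorNorm c g N :=
  add_nonneg (Finset.sum_nonneg fun _ _ => norm_nonneg _) (tsum_nonneg fun _ => norm_nonneg _)

theorem ofReal_commutatorNorm_le (c g : ℤ → R) (N : ℕ) :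
    ENNReal.ofReal (commutatorNorm c g N) ≤
      ∑' p, ‖g p‖ₑ * shellSum (‖c ·‖ₑ) N p.natAbs := by
  set S : Finset ℤ := Finset.Icc (-(N : ℤ)) N
  have h₁ : ENNReal.ofReal (∑ l ∈ S, ‖∑' k : {k : ℤ // (N : ℤ) < |k|}, c k.val * g (l - k.val)‖) ≤
      ∑' p, ‖g p‖ₑ *
        ∑' k, {k ∈ {k : ℤ | (N : ℤ) < |k|} | k + p ∈ (S : Set ℤ)}.indicator (‖c ·‖ₑ) k := by
    rw [ENNReal.ofReal_sum_of_nonneg fun _ _ => norm_nonneg _]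
    simp only [ofReal_norm]
    rw [← Finset.tsum_subtype']
    exact tsum_enorm_tsum_mul_sub_le _ {k | (N : ℤ) < |k|} c g
  have h₂ : ENNReal.ofReal (∑' l : {l : ℤ // (N : ℤ) < |l|}, ‖∑ k ∈ S, c k * g (l.val - k)‖) ≤
      ∑' p, ‖g p‖ₑ *
        ∑' k, {k ∈ (S : Set ℤ) | k + p ∈ {l : ℤ | (N : ℤ) < |l|}}.indicator (‖c ·‖ₑ) k := by
    refine (ENNReal.ofReal_tsum_le_tsum_ofReal fun _ => norm_nonneg _).trans ?_
    simp only [ofReal_norm, ← Finset.tsum_subtype' S]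
    exact tsum_enorm_tsum_mul_sub_le {l | (N : ℤ) < |l|} _ c g
  rw [commutatorNorm, ENNReal.ofReal_add (Finset.sum_nonneg fun _ _ => norm_nonneg _)
    (tsum_nonneg fun _ => norm_nonneg _)]
  refine (add_le_add h₁ h₂).trans ?_
  rw [← ENNReal.tsum_add]
  simp only [← mul_add]
  exact ENNReal.tsum_le_tsum fun p => by gcongr; exact tsum_crossing_le_shellSum _ N p

end CommutatorNorm

theorem tsum_natAbs_mul_enorm_ne_top {F : Type*} [NormedAddCommGroup F] {g : ℤ → F}
    (hg : Summable fun p : ℤ => (|p| : ℝ) * ‖g p‖) :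
    ∑' p : ℤ, (p.natAbs : ℝ≥0∞) * ‖g p‖ₑ ≠ ∞ := by
  have hterm (p : ℤ) : (p.natAbs : ℝ≥0∞) * ‖g p‖ₑ = ENNReal.ofReal (|(p : ℝ)| * ‖g p‖) := by
    rw [ENNReal.ofReal_mul (abs_nonneg _), ofReal_norm, ← Int.cast_abs, ← Nat.cast_natAbs,
      ENNReal.ofReal_natCast]
  simp only [hterm, ← ENNReal.ofReal_tsum_of_nonneg (fun _ => by positivity) hg]
  exact ENNReal.ofReal_ne_top

theorem tendsto_tsum_enorm_mul_shellSum {E F : Type*} [NormedAddCommGroup E]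
    [NormedAddCommGroup F] (c : ℤ → E) (hc : Tendsto c cofinite (𝓝 0)) (g : ℤ → F)
    (hg : Summable fun p : ℤ => (|p| : ℝ) * ‖g p‖) :
    Tendsto (fun N => ∑' p, ‖g p‖ₑ * shellSum (‖c ·‖ₑ) N p.natAbs) atTop (𝓝 0) := by
  have hc' : Tendsto (‖c ·‖ₑ) cofinite (𝓝 0) := by simpa only [enorm_zero] using hc.enorm
  obtain ⟨M, hM⟩ := hc.nnnorm.bddAbove_range_of_cofinite
  have hcM (k : ℤ) : ‖c k‖ₑ ≤ M := ENNReal.coe_le_coe.2 (hM ⟨k, rfl⟩)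
  have hfin : ∑' p : ℤ, ‖g p‖ₑ * (4 * p.natAbs * M) ≠ ∞ := by
    simp only [show ∀ p : ℤ, ‖g p‖ₑ * (4 * p.natAbs * M) = 4 * M * (p.natAbs * ‖g p‖ₑ) by
      intro p; ring]
    rw [ENNReal.tsum_mul_left]
    exact ENNReal.mul_ne_top (by finiteness) (tsum_natAbs_mul_enorm_ne_top hg)
  have hlim (p : ℤ) :
      Tendsto (fun N => ‖g p‖ₑ * shellSum (‖c ·‖ₑ) N p.natAbs) atTop (𝓝 0) := by
    simpa using ENNReal.Tendsto.const_mul (tendsto_shellSum hc' p.natAbs) (Or.inr enorm_ne_top)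
  have hbound (N : ℕ) (p : ℤ) :
      ‖g p‖ₑ * shellSum (‖c ·‖ₑ) N p.natAbs ≤ ‖g p‖ₑ * (4 * p.natAbs * M) := by
    gcongr
    exact shellSum_le _ N _ hcM
  simpa using ENNReal.tendsto_tsum_of_dominated_convergence _ hbound hfin hlim

/-- **Commutator lemma (coefficient form; generalization of Rajchman's theorem).**
If `c(k) → 0` as `|k| → ∞` and `Σ_p |p|·|g(p)| < ∞`, then
`Σ_{|l|≤N} |Σ_{|k|>N} c(k) g(l−k)| + Σ_{|l|>N} |Σ_{|k|≤N} c(k) g(l−k)| → 0` as `N → ∞`. -/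
theorem commutator_lemma
    (c : ℤ → ℂ) (hc : Tendsto c cofinite (nhds 0))
    (g : ℤ → ℂ) (hg : Summable (fun p : ℤ => (|p| : ℝ) * ‖g p‖)) :
    Tendsto (fun N : ℕ =>
        (∑ l ∈ Finset.Icc (-(N : ℤ)) (N : ℤ),
            ‖∑' k : {k : ℤ // (N : ℤ) < |k|}, c k.val * g (l - k.val)‖) +
        (∑' l : {l : ℤ // (N : ℤ) < |l|},
            ‖∑ k ∈ Finset.Icc (-(N : ℤ)) (N : ℤ), c k * g (l.val - k)‖))
      atTop (nhds 0) :=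
  tendsto_nhds_zero_of_ofReal_le (commutatorNorm_nonneg c g) (ofReal_commutatorNorm_le c g)
    (tendsto_tsum_enorm_mul_shellSum c hc g hg)

end CommutatorLemma
end
end

section
/- Characteristic determinant asymptotics (Lemma 1.1). Fix an even integer n = 2q with q ≥ 1 and boundary data (σ_ν, a_ν, b_ν). There exists a constant C > 0 (depending only on n and the boundary data) such that for every r ≥ 1 and every ρ = r e^{iφ} with 0 ≤ φ ≤ 2π/n: |det η(ρ) − Θ| ≤ C·( exp(−Im ρ) + exp(−Im(ε_{q−1} ρ)) ). Consequently, if Θ ≠ 0 and |det η(ρ)| ≥ c > 0, then |(det η(ρ))^{−1} − Θ^{−1}| ≤ (C/(c·|Θ|))·( exp(−Im ρ) + exp(−Im(ε_{q−1} ρ)) ). -/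
noncomputable section

open MeasureTheory Filter Topology

namespace Equi

/-- `ε_k = exp(2πik/n)`. -/
def eps (n : ℕ) (k : ℤ) : ℂ := Complex.exp (2 * Real.pi * Complex.I * k / n)

/-- `y_k(x,ρ) = exp(iρ ε_k x)`. -/
def yf (n : ℕ) (k : ℤ) (x : ℝ) (ρ : ℂ) : ℂ := Complex.exp (Complex.I * ρ * eps n k * x)

/-- The fundamental system `z_k`. -/
def zf (n q : ℕ) (k : Fin n) (x : ℝ) (ρ : ℂ) : ℂ :=
  if (k : ℕ) < q then yf n ((k : ℕ) : ℤ) x ρ else yf n ((k : ℕ) : ℤ) (x - 1) ρ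

/-- Boundary data: orders `σ_ν` and coefficients `a_ν`, `b_ν`. -/
structure BD (n : ℕ) where
  ord : Fin n → Fin n
  a : Fin n → ℂ
  b : Fin n → ℂ

/-- The matrix `η(ρ)`, with entries `η_{νk} = ε_k^{σ_ν}(b_ν z_k(1,ρ) + a_ν z_k(0,ρ))`. -/
def etaM (n q : ℕ) (L : BD n) (ρ : ℂ) : Matrix (Fin n) (Fin n) ℂ :=
  Matrix.of fun ν k => eps n ((k : ℕ) : ℤ) ^ ((L.ord ν : ℕ)) *
    (L.b ν * zf n q k 1 ρ + L.a ν * zf n q k 0 ρ)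

/-- The matrix whose determinant is the regularity determinant `Θ`. -/
def ThetaM (n q : ℕ) (L : BD n) : Matrix (Fin n) (Fin n) ℂ :=
  Matrix.of fun ν j => (if (j : ℕ) < q then L.a ν else L.b ν) * eps n ((j : ℕ) : ℤ) ^ ((L.ord ν : ℕ))

/-- The regularity determinant `Θ`. -/
def Theta (n q : ℕ) (L : BD n) : ℂ := (ThetaM n q L).det

/-- The point `ρ = r e^{iφ}` on the arc `Γ_r`. -/
def arcPt (r φ : ℝ) : ℂ := (r : ℂ) * Complex.exp (Complex.I * φ)

end Equi

/-! On the sector `0 ≤ arg ρ ≤ π/q` the angles `arg ρ + πk/q`, `k < q`, lie in `[0, π]`, so by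
concavity of `sin` each `Im (ε_k ρ)` is nonnegative and at least
`μ = min (Im ρ) (Im (ε_{q-1} ρ))`. As `ε_{k+q} = -ε_k`, every column of `η(ρ)` is then the
corresponding column of the matrix of `Θ` plus a term of size `O(e^{-μ})`, and all entries stay
bounded; expanding both determinants over permutations gives the first estimate, and
`x⁻¹ - y⁻¹ = (y - x) / (x y)` the second. -/

open Finset in
theorem norm_prod_sub_prod_le {R ι : Type*} [NormedCommRing R] [NormOneClass R] [DecidableEq ι]
    (s : Finset ι) {u v : ι → R} {M d : ℝ}
    (hu : ∀ i ∈ s, ‖u i‖ ≤ M) (hv : ∀ i ∈ s, ‖v i‖ ≤ M) (huv : ∀ i ∈ s, ‖u i - v i‖ ≤ d) :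
    ‖∏ i ∈ s, u i - ∏ i ∈ s, v i‖ ≤ #s * M ^ (#s - 1) * d := by
  induction s using Finset.induction with
  | empty => simp
  | @insert a s has ih =>
    have hM : 0 ≤ M := (norm_nonneg _).trans (hu a (mem_insert_self a s))
    have hd : 0 ≤ d := (norm_nonneg _).trans (huv a (mem_insert_self a s))
    have hprod : ‖∏ i ∈ s, u i‖ ≤ M ^ #s := calc
      ‖∏ i ∈ s, u i‖ ≤ ∏ i ∈ s, ‖u i‖ := Finset.norm_prod_le _ _
      _ ≤ ∏ _i ∈ s, M :=
        prod_le_prod (fun _ _ ↦ norm_nonneg _) fun i hi ↦ hu i (mem_insert_of_mem hi)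
      _ = M ^ #s := prod_const M
    have ih' := ih (fun i hi ↦ hu i (mem_insert_of_mem hi)) (fun i hi ↦ hv i (mem_insert_of_mem hi))
      (fun i hi ↦ huv i (mem_insert_of_mem hi))
    have hpow : (#s : ℝ) * (M * M ^ (#s - 1)) = #s * M ^ #s := by
      rcases eq_or_ne #s 0 with h | h
      · simp [h]
      · rw [mul_pow_sub_one h]
    rw [prod_insert has, prod_insert has, card_insert_of_notMem has, Nat.add_sub_cancel]
    calc ‖u a * ∏ i ∈ s, u i - v a * ∏ i ∈ s, v i‖
        = ‖(u a - v a) * ∏ i ∈ s, u i + v a * (∏ i ∈ s, u i - ∏ i ∈ s, v i)‖ := by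
          congr 1; ring
      _ ≤ ‖u a - v a‖ * ‖∏ i ∈ s, u i‖ + ‖v a‖ * ‖∏ i ∈ s, u i - ∏ i ∈ s, v i‖ :=
        (norm_add_le _ _).trans (add_le_add (norm_mul_le _ _) (norm_mul_le _ _))
      _ ≤ d * M ^ #s + M * (#s * M ^ (#s - 1) * d) := by
        gcongr
        exacts [huv a (mem_insert_self a s), hv a (mem_insert_self a s)]
      _ = ↑(#s + 1) * M ^ #s * d := by push_cast; linear_combination d * hpow

theorem Matrix.norm_det_sub_det_le {R n : Type*} [NormedCommRing R] [NormOneClass R]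
    [Fintype n] [DecidableEq n] {A B : Matrix n n R} {M d : ℝ}
    (hA : ∀ i j, ‖A i j‖ ≤ M) (hB : ∀ i j, ‖B i j‖ ≤ M) (hAB : ∀ i j, ‖A i j - B i j‖ ≤ d) :
    ‖A.det - B.det‖ ≤ (Fintype.card n).factorial *
      (Fintype.card n * M ^ (Fintype.card n - 1) * d) := by
  rw [Matrix.det_apply', Matrix.det_apply', ← Finset.sum_sub_distrib]
  refine (norm_sum_le _ _).trans ?_
  have hterm : ∀ σ : Equiv.Perm n,
      ‖(Equiv.Perm.sign σ : R) * ∏ i, A (σ i) i - (Equiv.Perm.sign σ : R) * ∏ i, B (σ i) i‖ ≤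
        Fintype.card n * M ^ (Fintype.card n - 1) * d := by
    intro σ
    have hsign : ‖((Equiv.Perm.sign σ : ℤ) : R)‖ = 1 := by
      rcases Int.units_eq_one_or (Equiv.Perm.sign σ) with h | h <;> simp [h]
    rw [← mul_sub]
    refine (norm_mul_le _ _).trans ?_
    rw [hsign, one_mul]
    simpa using norm_prod_sub_prod_le Finset.univ (fun i _ ↦ hA (σ i) i) (fun i _ ↦ hB (σ i) i)
      (fun i _ ↦ hAB (σ i) i)
  refine (Finset.sum_le_card_nsmul _ _ _ fun σ _ ↦ hterm σ).trans_eq ?_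
  rw [Finset.card_univ, Fintype.card_perm, nsmul_eq_mul]

theorem norm_inv_sub_inv_le {𝕜 : Type*} [NormedField 𝕜] {x y : 𝕜} {c e : ℝ} (hy : y ≠ 0)
    (hc : 0 < c) (hx : c ≤ ‖x‖) (h : ‖x - y‖ ≤ e) : ‖x⁻¹ - y⁻¹‖ ≤ e / (c * ‖y‖) := by
  have hx0 : x ≠ 0 := norm_pos_iff.mp (hc.trans_le hx)
  rw [inv_sub_inv hx0 hy, norm_div, norm_mul, norm_sub_rev]
  exact div_le_div₀ ((norm_nonneg _).trans h) h (by positivity) (by gcongr)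

theorem Complex.norm_exp_I_mul (w : ℂ) : ‖Complex.exp (Complex.I * w)‖ = Real.exp (-w.im) := by
  simp [Complex.norm_exp]

namespace Equi

open Real Set

theorem norm_eps (n : ℕ) (k : ℤ) : ‖eps n k‖ = 1 := by
  rw [eps, show 2 * (π : ℂ) * Complex.I * k / n = ((2 * π * k / n : ℝ) : ℂ) * Complex.I by
    push_cast; ring]
  exact Complex.norm_exp_ofReal_mul_I _

theorem eps_add_half {q : ℕ} (hq : q ≠ 0) (k : ℤ) : eps (2 * q) (k + q) = -eps (2 * q) k := by
  have hq' : (q : ℂ) ≠ 0 := Nat.cast_ne_zero.mpr hq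
  rw [eps, eps, show 2 * (π : ℂ) * Complex.I * ((k + q : ℤ) : ℂ) / ((2 * q : ℕ) : ℂ) =
      2 * π * Complex.I * k / ((2 * q : ℕ) : ℂ) + π * Complex.I by push_cast; field_simp,
    Complex.exp_add, Complex.exp_pi_mul_I, mul_neg_one]

theorem im_eps_mul_arcPt (n : ℕ) (k : ℤ) (r φ : ℝ) :
    (eps n k * arcPt r φ).im = r * sin (φ + 2 * π * k / n) := by
  rw [eps, arcPt, mul_left_comm, ← Complex.exp_add,
    show 2 * (π : ℂ) * Complex.I * k / n + Complex.I * φ =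
      ((φ + 2 * π * k / n : ℝ) : ℂ) * Complex.I by push_cast; ring,
    Complex.im_ofReal_mul, Complex.exp_ofReal_mul_I_im]

theorem im_arcPt (r φ : ℝ) : (arcPt r φ).im = r * sin φ := by
  simpa [eps] using im_eps_mul_arcPt 0 0 r φ

theorem norm_zf_of_lt {n q : ℕ} {k : Fin n} (hk : (k : ℕ) < q) (x : ℝ) (ρ : ℂ) :
    ‖zf n q k x ρ‖ = exp (-(x * (eps n k * ρ).im)) := by
  rw [zf, if_pos hk, yf, show Complex.I * ρ * eps n k * x = Complex.I * (x * (eps n k * ρ)) by ring,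
    Complex.norm_exp_I_mul, Complex.im_ofReal_mul]

theorem norm_zf_of_le {q : ℕ} (hq : q ≠ 0) {k : Fin (2 * q)} (hk : q ≤ (k : ℕ)) (x : ℝ) (ρ : ℂ) :
    ‖zf (2 * q) q k x ρ‖ = exp (-((1 - x) * (eps (2 * q) ((k : ℕ) - q : ℕ) * ρ).im)) := by
  have heps : eps (2 * q) (k : ℕ) = -eps (2 * q) ((k : ℕ) - q : ℕ) := by
    rw [← eps_add_half hq, Nat.cast_sub hk, sub_add_cancel]
  rw [zf, if_neg hk.not_gt, yf, heps,
    show Complex.I * ρ * -eps (2 * q) ((k : ℕ) - q : ℕ) * ((x - 1 : ℝ) : ℂ) =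
      Complex.I * ((1 - x : ℝ) * (eps (2 * q) ((k : ℕ) - q : ℕ) * ρ)) by push_cast; ring,
    Complex.norm_exp_I_mul, Complex.im_ofReal_mul]

theorem etaM_sub_ThetaM_apply (n q : ℕ) (L : BD n) (ρ : ℂ) (ν k : Fin n) :
    etaM n q L ρ ν k - ThetaM n q L ν k = eps n k ^ (L.ord ν : ℕ) *
      if (k : ℕ) < q then L.b ν * zf n q k 1 ρ else L.a ν * zf n q k 0 ρ := by
  by_cases hk : (k : ℕ) < q <;> simp [etaM, ThetaM, zf, yf, hk] <;> ring

theorem norm_ThetaM_apply_le {n q : ℕ} {L : BD n} {K : ℝ} (hK : ∀ ν, ‖L.a ν‖ + ‖L.b ν‖ ≤ K)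
    (ν k : Fin n) : ‖ThetaM n q L ν k‖ ≤ K := by
  rw [ThetaM, Matrix.of_apply, norm_mul, norm_pow, norm_eps, one_pow, mul_one]
  split_ifs <;> linarith [hK ν, norm_nonneg (L.a ν), norm_nonneg (L.b ν)]

def decayRate (q : ℕ) (ρ : ℂ) : ℝ := min ρ.im (eps (2 * q) ((q : ℤ) - 1) * ρ).im

theorem exp_neg_decayRate_le (q : ℕ) (ρ : ℂ) :
    exp (-decayRate q ρ) ≤ exp (-ρ.im) + exp (-(eps (2 * q) ((q : ℤ) - 1) * ρ).im) := by
  rcases min_choice ρ.im (eps (2 * q) ((q : ℤ) - 1) * ρ).im with h | h <;>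
    rw [decayRate, h] <;> linarith [exp_pos (-ρ.im), exp_pos (-(eps (2 * q) ((q : ℤ) - 1) * ρ).im)]

section Sector

variable {q : ℕ} {r φ : ℝ} {L : BD (2 * q)} {K : ℝ}

theorem angle_mem_Icc_zero_pi {k : ℕ} (hk : k < q)
    (hφ : φ ∈ Icc 0 (2 * π / ((2 * q : ℕ) : ℝ))) :
    φ + 2 * π * k / ((2 * q : ℕ) : ℝ) ∈ Icc 0 π := by
  have hq : (0 : ℝ) < q := by exact_mod_cast hk.trans_le' k.zero_le
  have hk' : (k : ℝ) + 1 ≤ q := by exact_mod_cast hk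
  obtain ⟨hφ0, hφ1⟩ := hφ
  rw [show 2 * π / ((2 * q : ℕ) : ℝ) = π / q by push_cast; field_simp] at hφ1
  rw [show 2 * π * k / ((2 * q : ℕ) : ℝ) = π / q * k by push_cast; field_simp]
  have hπq : 0 < π / q := by positivity
  refine ⟨by positivity, ?_⟩
  calc φ + π / q * k ≤ π / q + π / q * k := by gcongr
    _ = π / q * (k + 1) := by ring
    _ ≤ π / q * q := by gcongr
    _ = π := by field_simp

theorem im_eps_mul_arcPt_nonneg {k : ℕ} (hk : k < q) (hr : 0 ≤ r)
    (hφ : φ ∈ Icc 0 (2 * π / ((2 * q : ℕ) : ℝ))) : 0 ≤ (eps (2 * q) k * arcPt r φ).im := by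
  obtain ⟨h0, hπ⟩ := angle_mem_Icc_zero_pi hk hφ
  rw [im_eps_mul_arcPt, Int.cast_natCast]
  exact mul_nonneg hr (sin_nonneg_of_nonneg_of_le_pi h0 hπ)

theorem decayRate_arcPt_le {k : ℕ} (hk : k < q) (hr : 0 ≤ r)
    (hφ : φ ∈ Icc 0 (2 * π / ((2 * q : ℕ) : ℝ))) :
    decayRate q (arcPt r φ) ≤ (eps (2 * q) k * arcPt r φ).im := by
  have hq : 0 < q := hk.trans_le' k.zero_le
  have hconc : ConcaveOn ℝ (Icc 0 π) fun θ ↦ r * sin θ :=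
    strictConcaveOn_sin_Icc.concaveOn.smul hr
  have hmem := hconc.min_le_of_mem_Icc (angle_mem_Icc_zero_pi hq hφ)
    (angle_mem_Icc_zero_pi (Nat.sub_one_lt hq.ne') hφ)
    (z := φ + 2 * π * k / ((2 * q : ℕ) : ℝ)) ⟨?_, ?_⟩
  · rw [decayRate, im_arcPt, im_eps_mul_arcPt, im_eps_mul_arcPt]
    push_cast [Nat.cast_pred hq] at hmem ⊢
    simpa using hmem
  · simp only [Nat.cast_zero, mul_zero, zero_div, add_zero, le_add_iff_nonneg_right]
    positivity
  · have : (k : ℝ) ≤ ((q - 1 : ℕ) : ℝ) := by exact_mod_cast Nat.le_sub_one_of_lt hk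
    gcongr

theorem norm_zf_arcPt_le_one (hq : q ≠ 0) (hr : 0 ≤ r)
    (hφ : φ ∈ Icc 0 (2 * π / ((2 * q : ℕ) : ℝ))) (k : Fin (2 * q)) {x : ℝ} (hx : x ∈ Icc 0 1) :
    ‖zf (2 * q) q k x (arcPt r φ)‖ ≤ 1 := by
  by_cases hk : (k : ℕ) < q
  · rw [norm_zf_of_lt hk, exp_le_one_iff, neg_nonpos]
    exact mul_nonneg hx.1 (im_eps_mul_arcPt_nonneg hk hr hφ)
  · rw [norm_zf_of_le hq (not_lt.mp hk), exp_le_one_iff, neg_nonpos]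
    exact mul_nonneg (sub_nonneg.mpr hx.2) (im_eps_mul_arcPt_nonneg (by omega) hr hφ)

theorem norm_zf_one_arcPt_le {k : Fin (2 * q)} (hk : (k : ℕ) < q) (hr : 0 ≤ r)
    (hφ : φ ∈ Icc 0 (2 * π / ((2 * q : ℕ) : ℝ))) :
    ‖zf (2 * q) q k 1 (arcPt r φ)‖ ≤ exp (-decayRate q (arcPt r φ)) := by
  rw [norm_zf_of_lt hk, one_mul, exp_le_exp, neg_le_neg_iff]
  exact decayRate_arcPt_le hk hr hφ

theorem norm_zf_zero_arcPt_le (hq : q ≠ 0) {k : Fin (2 * q)} (hk : q ≤ (k : ℕ)) (hr : 0 ≤ r)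
    (hφ : φ ∈ Icc 0 (2 * π / ((2 * q : ℕ) : ℝ))) :
    ‖zf (2 * q) q k 0 (arcPt r φ)‖ ≤ exp (-decayRate q (arcPt r φ)) := by
  rw [norm_zf_of_le hq hk, sub_zero, one_mul, exp_le_exp, neg_le_neg_iff]
  exact decayRate_arcPt_le (by omega) hr hφ

theorem norm_etaM_arcPt_apply_le (hq : q ≠ 0) (hr : 0 ≤ r)
    (hφ : φ ∈ Icc 0 (2 * π / ((2 * q : ℕ) : ℝ))) (hK : ∀ ν, ‖L.a ν‖ + ‖L.b ν‖ ≤ K)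
    (ν k : Fin (2 * q)) : ‖etaM (2 * q) q L (arcPt r φ) ν k‖ ≤ K := by
  have hz (x : ℝ) (hx : x ∈ Icc 0 1) := norm_zf_arcPt_le_one hq hr hφ k hx
  rw [etaM, Matrix.of_apply, norm_mul, norm_pow, norm_eps, one_pow, one_mul]
  calc _ ≤ ‖L.b ν‖ * ‖zf (2 * q) q k 1 (arcPt r φ)‖ + ‖L.a ν‖ * ‖zf (2 * q) q k 0 (arcPt r φ)‖ :=
        (norm_add_le _ _).trans_eq (by rw [norm_mul, norm_mul])
    _ ≤ ‖L.b ν‖ * 1 + ‖L.a ν‖ * 1 := by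
        gcongr
        exacts [hz 1 (by simp), hz 0 (by simp)]
    _ ≤ K := by linarith [hK ν]

theorem norm_etaM_sub_ThetaM_arcPt_apply_le (hq : q ≠ 0) (hr : 0 ≤ r)
    (hφ : φ ∈ Icc 0 (2 * π / ((2 * q : ℕ) : ℝ))) (hK : ∀ ν, ‖L.a ν‖ + ‖L.b ν‖ ≤ K)
    (ν k : Fin (2 * q)) :
    ‖etaM (2 * q) q L (arcPt r φ) ν k - ThetaM (2 * q) q L ν k‖ ≤
      K * exp (-decayRate q (arcPt r φ)) := by
  have hK0 : 0 ≤ K := (add_nonneg (norm_nonneg _) (norm_nonneg _)).trans (hK ν)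
  rw [etaM_sub_ThetaM_apply, norm_mul, norm_pow, norm_eps, one_pow, one_mul]
  split_ifs with hk <;> rw [norm_mul]
  · exact mul_le_mul (by linarith [hK ν, norm_nonneg (L.a ν)]) (norm_zf_one_arcPt_le hk hr hφ)
      (norm_nonneg _) hK0
  · exact mul_le_mul (by linarith [hK ν, norm_nonneg (L.b ν)])
      (norm_zf_zero_arcPt_le hq (not_lt.mp hk) hr hφ) (norm_nonneg _) hK0

theorem norm_det_etaM_arcPt_sub_Theta_le (hq : q ≠ 0) (hr : 0 ≤ r)
    (hφ : φ ∈ Icc 0 (2 * π / ((2 * q : ℕ) : ℝ))) (hK : ∀ ν, ‖L.a ν‖ + ‖L.b ν‖ ≤ K) :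
    ‖(etaM (2 * q) q L (arcPt r φ)).det - Theta (2 * q) q L‖ ≤
      (2 * q).factorial * (2 * q * K ^ (2 * q - 1) * K) * exp (-decayRate q (arcPt r φ)) := by
  have h := Matrix.norm_det_sub_det_le (norm_etaM_arcPt_apply_le hq hr hφ hK)
    (norm_ThetaM_apply_le hK) (norm_etaM_sub_ThetaM_arcPt_apply_le hq hr hφ hK)
  rw [Fintype.card_fin] at h
  exact h.trans_eq (by push_cast; ring)

end Sector

/-- **Lemma 1.1 (characteristic determinant asymptotics).** There is `C > 0` such that
`|det η(ρ) − Θ| ≤ C(e^{−Im ρ} + e^{−Im(ε_{q−1}ρ)})` on the arcs `Γ_r`, `r ≥ 1`; consequently,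
where `Θ ≠ 0` and `|det η(ρ)| ≥ c > 0`, also
`|(det η(ρ))⁻¹ − Θ⁻¹| ≤ (C/(c|Θ|))(e^{−Im ρ} + e^{−Im(ε_{q−1}ρ)})`. -/
theorem characteristic_determinant_asymptotics
    (n q : ℕ) (hn : n = 2 * q) (hq : 1 ≤ q) (L : BD n) :
    ∃ C : ℝ, 0 < C ∧
      (∀ r : ℝ, 1 ≤ r → ∀ φ ∈ Set.Icc (0:ℝ) (2 * Real.pi / n),
        ‖(etaM n q L (arcPt r φ)).det - Theta n q L‖ ≤
          C * (Real.exp (-(arcPt r φ).im) +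
               Real.exp (-(eps n ((q : ℤ) - 1) * arcPt r φ).im))) ∧
      (Theta n q L ≠ 0 → ∀ c : ℝ, 0 < c → ∀ r : ℝ, 1 ≤ r →
        ∀ φ ∈ Set.Icc (0:ℝ) (2 * Real.pi / n),
          c ≤ ‖(etaM n q L (arcPt r φ)).det‖ →
          ‖((etaM n q L (arcPt r φ)).det)⁻¹ - (Theta n q L)⁻¹‖ ≤
            C / (c * ‖Theta n q L‖) *
              (Real.exp (-(arcPt r φ).im) +
               Real.exp (-(eps n ((q : ℤ) - 1) * arcPt r φ).im))) := by
  subst hn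
  set K := 1 + ∑ ν, (‖L.a ν‖ + ‖L.b ν‖)
  have hK (ν) : ‖L.a ν‖ + ‖L.b ν‖ ≤ K :=
    (Finset.single_le_sum (f := fun ν ↦ ‖L.a ν‖ + ‖L.b ν‖) (fun _ _ ↦ by positivity)
      (Finset.mem_univ ν)).trans (le_add_of_nonneg_left zero_le_one)
  set C : ℝ := (2 * q).factorial * (2 * q * K ^ (2 * q - 1) * K)
  have hC : 0 < C := by positivity
  have hmain : ∀ r : ℝ, 1 ≤ r → ∀ φ ∈ Icc (0:ℝ) (2 * π / ((2 * q : ℕ) : ℝ)),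
      ‖(etaM (2 * q) q L (arcPt r φ)).det - Theta (2 * q) q L‖ ≤
        C * (exp (-(arcPt r φ).im) + exp (-(eps (2 * q) ((q : ℤ) - 1) * arcPt r φ).im)) :=
    fun r hr φ hφ ↦ (norm_det_etaM_arcPt_sub_Theta_le (by omega) (by linarith) hφ hK).trans
      (mul_le_mul_of_nonneg_left (exp_neg_decayRate_le q _) hC.le)
  refine ⟨C, hC, hmain, fun hΘ c hc r hr φ hφ hcη ↦ ?_⟩
  rw [div_mul_eq_mul_div]
  exact norm_inv_sub_inv_le hΘ hc hcη (hmain r hr φ hφ)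

end Equi
end
end

section
/- Vanishing of intermediate-index terms (Lemma 2.2). Fix an even integer n = 2q with q ≥ 1, indices k ∈ {0,…,n−1} and m ∈ {0,…,n−1} with m ∉ {0, q−1, q, n−1}. Then for every f ∈ C_0(0,1): sup_{x∈[0,1]} | ∫_{Γ_r} z_k(x,ρ) ( ∫_0^1 f(ξ) u_m(ξ,ρ) dξ ) dρ | → 0 as r → ∞ (r ranging over all positive reals). -/
noncomputable section

open MeasureTheory Filter Topology

namespace Equi

/-- The functions `u_m(ξ,ρ)`. -/
def uf (n q : ℕ) (m : Fin n) (ξ : ℝ) (ρ : ℂ) : ℂ :=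
  if (m : ℕ) < q then yf n ((m : ℕ) : ℤ) (1 - ξ) ρ else yf n ((m : ℕ) : ℤ) (-ξ) ρ

/-- Integral over the circular arc `Γ_r = {r e^{iφ} : 0 ≤ φ ≤ 2π/n}`. -/
def contour (n : ℕ) (r : ℝ) (F : ℂ → ℂ) : ℂ :=
  ∫ φ in (0:ℝ)..(2 * Real.pi / n),
    F ((r : ℂ) * Complex.exp (Complex.I * φ)) * (Complex.I * r * Complex.exp (Complex.I * φ))

/-- Supremum of `‖F‖` over a subset of `ℝ`. -/
def supOn (s : Set ℝ) (F : ℝ → ℂ) : ℝ := ⨆ x : s, ‖F x.val‖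

/-!
On the arc `ρ = r e^{iφ}` one has `|y_j(t, ρ)| = exp(-r t sin(φ + 2πj/n))`. The sign of this sine
gives `|z_k(x, ρ)| ≤ 1` for every `k` and `x ∈ [0, 1]`, while for an intermediate index `m` the
sine stays at distance `c = sin(2π/n) > 0` from `0`, so that `|u_m(ξ, ρ)|` is at most
`exp(-r c (1 - ξ))` (if `m < q`) or `exp(-r c ξ)` (if `m > q`). The factor `r` coming from the
length of the arc is then absorbed by the boundary layer of width `1/(r c)` in which this weight
lives, because `f` vanishes at the endpoint where the layer sits.
-/

open Set Real

theorem mul_integral_exp_le_inv {r c : ℝ} (hr : 0 ≤ r) (hc : 0 < c) :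
    r * ∫ ξ in (0:ℝ)..1, Real.exp (-(r * c * (1 - ξ))) ≤ 1 / c := by
  rcases hr.eq_or_lt with rfl | hr
  · simp [hc.le]
  have hrc : r * c ≠ 0 := by positivity
  have h := intervalIntegral.integral_comp_mul_sub (a := 0) (b := 1) Real.exp hrc (r * c)
  simp only [mul_zero, mul_one, zero_sub, sub_self, integral_exp, Real.exp_zero, smul_eq_mul] at h
  simp_rw [show ∀ ξ : ℝ, -(r * c * (1 - ξ)) = r * c * ξ - r * c by intro ξ; ring, h]
  calc r * ((r * c)⁻¹ * (1 - Real.exp (-(r * c)))) = (1 - Real.exp (-(r * c))) / c := by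
        field_simp
    _ ≤ 1 / c := by gcongr; linarith [Real.exp_pos (-(r * c))]

theorem tendsto_mul_exp_neg_mul_atTop {a : ℝ} (ha : 0 < a) :
    Tendsto (fun r : ℝ => r * Real.exp (-(a * r))) atTop (𝓝 0) := by
  simpa [div_eq_mul_inv, ← Real.exp_neg] using
    (isLittleO_pow_exp_pos_mul_atTop 1 ha).tendsto_div_nhds_zero

-- Away from `1` the weight is at most `exp (-r c δ)`, near `1` the factor `‖f‖` is small.
theorem mul_integral_norm_mul_exp_le {E : Type*} [NormedAddCommGroup E] {f : ℝ → E}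
    {r c δ η M : ℝ} (hr : 0 ≤ r) (hc : 0 < c) (hη : 0 ≤ η) (hf : ContinuousOn f (Icc 0 1))
    (hM : ∀ ξ ∈ Icc (0:ℝ) 1, ‖f ξ‖ ≤ M) (hnear : ∀ ξ ∈ Icc (0:ℝ) 1, 1 - ξ < δ → ‖f ξ‖ ≤ η) :
    r * ∫ ξ in (0:ℝ)..1, ‖f ξ‖ * Real.exp (-(r * c * (1 - ξ)))
      ≤ η / c + M * (r * Real.exp (-(c * δ * r))) := by
  have hM0 : 0 ≤ M := (norm_nonneg _).trans (hM 1 ⟨zero_le_one, le_rfl⟩)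
  have hpt : ∀ ξ ∈ Icc (0:ℝ) 1, ‖f ξ‖ * Real.exp (-(r * c * (1 - ξ)))
      ≤ η * Real.exp (-(r * c * (1 - ξ))) + M * Real.exp (-(c * δ * r)) := by
    intro ξ hξ
    rcases lt_or_ge (1 - ξ) δ with hξδ | hξδ
    · calc ‖f ξ‖ * Real.exp (-(r * c * (1 - ξ))) ≤ η * Real.exp (-(r * c * (1 - ξ))) := by
            gcongr; exact hnear ξ hξ hξδ
        _ ≤ _ := le_add_of_nonneg_right (by positivity)
    · have hexp : Real.exp (-(r * c * (1 - ξ))) ≤ Real.exp (-(c * δ * r)) :=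
        Real.exp_le_exp.2 (by nlinarith [mul_nonneg hr hc.le])
      calc ‖f ξ‖ * Real.exp (-(r * c * (1 - ξ))) ≤ M * Real.exp (-(c * δ * r)) := by
            gcongr; exact hM ξ hξ
        _ ≤ _ := le_add_of_nonneg_left (by positivity)
  have hint : ∫ ξ in (0:ℝ)..1, ‖f ξ‖ * Real.exp (-(r * c * (1 - ξ)))
      ≤ η * (∫ ξ in (0:ℝ)..1, Real.exp (-(r * c * (1 - ξ)))) + M * Real.exp (-(c * δ * r)) := by
    have hmono := intervalIntegral.integral_mono_on (μ := volume) zero_le_one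
      ((hf.norm.mul (by fun_prop)).intervalIntegrable_of_Icc zero_le_one)
      (Continuous.intervalIntegrable (by fun_prop) _ _) hpt
    rwa [intervalIntegral.integral_add (Continuous.intervalIntegrable (by fun_prop) _ _)
      intervalIntegrable_const, intervalIntegral.integral_const_mul,
      intervalIntegral.integral_const, sub_zero, one_smul] at hmono
  calc r * ∫ ξ in (0:ℝ)..1, ‖f ξ‖ * Real.exp (-(r * c * (1 - ξ)))
      ≤ η * (r * ∫ ξ in (0:ℝ)..1, Real.exp (-(r * c * (1 - ξ))))
          + M * (r * Real.exp (-(c * δ * r))) := by nlinarith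
    _ ≤ η * (1 / c) + M * (r * Real.exp (-(c * δ * r))) := by
        gcongr; exact mul_integral_exp_le_inv hr hc
    _ = η / c + M * (r * Real.exp (-(c * δ * r))) := by ring

theorem tendsto_mul_integral_norm_mul_exp_atTop {E : Type*} [NormedAddCommGroup E] {f : ℝ → E}
    {c : ℝ} (hc : 0 < c) (hf : ContinuousOn f (Icc 0 1)) (hf1 : f 1 = 0) :
    Tendsto (fun r : ℝ => r * ∫ ξ in (0:ℝ)..1, ‖f ξ‖ * Real.exp (-(r * c * (1 - ξ))))
      atTop (𝓝 0) := by
  obtain ⟨M, hM⟩ := isCompact_Icc.exists_bound_of_continuousOn hf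
  rw [Metric.tendsto_nhds]
  intro ε hε
  obtain ⟨δ, hδ, hcont⟩ := Metric.continuousWithinAt_iff.1 (hf 1 ⟨zero_le_one, le_rfl⟩)
    (ε * c / 2) (by positivity)
  have hnear : ∀ ξ ∈ Icc (0:ℝ) 1, 1 - ξ < δ → ‖f ξ‖ ≤ ε * c / 2 := fun ξ hξ hξδ => by
    have hdist : dist ξ 1 < δ := by
      rwa [Real.dist_eq, abs_sub_comm, abs_of_nonneg (by linarith [hξ.2])]
    simpa [hf1] using (hcont hξ hdist).le
  have hfar := ((tendsto_mul_exp_neg_mul_atTop (mul_pos hc hδ)).const_mul M).eventually_lt_const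
    (by linarith : M * 0 < ε / 2)
  filter_upwards [hfar, eventually_ge_atTop 0] with r hfar hr
  have hbound := mul_integral_norm_mul_exp_le hr hc (by positivity) hf hM hnear
  have hnonneg : 0 ≤ ∫ ξ in (0:ℝ)..1, ‖f ξ‖ * Real.exp (-(r * c * (1 - ξ))) :=
    intervalIntegral.integral_nonneg zero_le_one fun ξ _ => by positivity
  rw [Real.dist_eq, sub_zero, abs_of_nonneg (mul_nonneg hr hnonneg)]
  rw [show ε * c / 2 / c = ε / 2 by field_simp] at hbound
  linarith

theorem tendsto_mul_integral_norm_mul_exp_atTop' {E : Type*} [NormedAddCommGroup E] {f : ℝ → E}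
    {c : ℝ} (hc : 0 < c) (hf : ContinuousOn f (Icc 0 1)) (hf0 : f 0 = 0) :
    Tendsto (fun r : ℝ => r * ∫ ξ in (0:ℝ)..1, ‖f ξ‖ * Real.exp (-(r * c * ξ))) atTop (𝓝 0) := by
  have hrefl : ContinuousOn (fun ξ => f (1 - ξ)) (Icc 0 1) :=
    hf.comp (by fun_prop) fun ξ hξ => ⟨by linarith [hξ.2], by linarith [hξ.1]⟩
  refine (tendsto_mul_integral_norm_mul_exp_atTop hc hrefl (by simpa using hf0)).congr fun r => ?_
  have := intervalIntegral.integral_comp_sub_left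
    (fun ξ => ‖f ξ‖ * Real.exp (-(r * c * ξ))) (a := 0) (b := 1) 1
  rw [sub_zero, sub_self] at this
  rw [this]

theorem sin_le_sin_of_le_of_le_pi_sub {a θ : ℝ} (ha : -(π / 2) ≤ a) (h₁ : a ≤ θ) (h₂ : θ ≤ π - a) :
    Real.sin a ≤ Real.sin θ := by
  rcases le_total θ (π / 2) with hθ | hθ
  · exact Real.sin_le_sin_of_le_of_le_pi_div_two ha hθ h₁
  · rw [← Real.sin_pi_sub θ]
    exact Real.sin_le_sin_of_le_of_le_pi_div_two ha (by linarith) (by linarith)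

theorem norm_yf_arc (n : ℕ) (j : ℤ) (t r φ : ℝ) :
    ‖yf n j t (r * Complex.exp (Complex.I * φ))‖
      = Real.exp (-(r * t * Real.sin (φ + 2 * π * j / n))) := by
  have harg : Complex.I * (r * Complex.exp (Complex.I * φ)) * eps n j * t
      = r * t * (Complex.exp ((φ + 2 * π * j / n : ℝ) * Complex.I) * Complex.I) := by
    have : Complex.exp ((φ + 2 * π * j / n : ℝ) * Complex.I)
        = Complex.exp (Complex.I * φ) * eps n j := by
      rw [eps, ← Complex.exp_add]; push_cast; ring_nf
    rw [this]; ring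
  rw [yf, harg, Complex.norm_exp]
  simp only [Complex.mul_re, Complex.mul_im, Complex.I_re, Complex.I_im, Complex.ofReal_re,
    Complex.ofReal_im, Complex.exp_ofReal_mul_I_re, Complex.exp_ofReal_mul_I_im]
  ring_nf

section Arc

variable {n q j : ℕ} {r φ : ℝ}

theorem mul_two_pi_div_of_eq_two_mul (hn : n = 2 * q) (hq : q ≠ 0) : q * (2 * π / n) = π := by
  subst hn; push_cast; field_simp

theorem arc_angle_mem (hφ : φ ∈ Icc 0 (2 * π / n)) :
    j * (2 * π / n) ≤ φ + 2 * π * j / n ∧ φ + 2 * π * j / n ≤ (j + 1) * (2 * π / n) := by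
  constructor <;> linarith [hφ.1, hφ.2, show 2 * π * j / n = j * (2 * π / n) by ring]

theorem sin_arc_nonneg (hn : n = 2 * q) (hj : j < q) (hφ : φ ∈ Icc 0 (2 * π / n)) :
    0 ≤ Real.sin (φ + 2 * π * j / n) := by
  have hq := mul_two_pi_div_of_eq_two_mul hn (by omega)
  have hj' : (j : ℝ) + 1 ≤ q := by exact_mod_cast hj
  have ha : 0 ≤ 2 * π / n := by positivity
  obtain ⟨h₁, h₂⟩ := arc_angle_mem (j := j) hφ
  exact Real.sin_nonneg_of_nonneg_of_le_pi (by nlinarith) (by nlinarith)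

theorem sin_le_sin_arc (hn : n = 2 * q) (hj₁ : 1 ≤ j) (hj₂ : j + 2 ≤ q)
    (hφ : φ ∈ Icc 0 (2 * π / n)) :
    Real.sin (2 * π / n) ≤ Real.sin (φ + 2 * π * j / n) := by
  have hq := mul_two_pi_div_of_eq_two_mul hn (by omega)
  have hj₁' : (1 : ℝ) ≤ j := by exact_mod_cast hj₁
  have hj₂' : (j : ℝ) + 2 ≤ q := by exact_mod_cast hj₂
  have ha : 0 ≤ 2 * π / n := by positivity
  obtain ⟨h₁, h₂⟩ := arc_angle_mem (j := j) hφ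
  exact sin_le_sin_of_le_of_le_pi_sub (by nlinarith [Real.pi_pos]) (by nlinarith) (by nlinarith)

theorem sin_arc_add_half (hn : n = 2 * q) (hq : q ≠ 0) :
    Real.sin (φ + 2 * π * ↑(j + q) / n) = -Real.sin (φ + 2 * π * j / n) := by
  have hπ := mul_two_pi_div_of_eq_two_mul hn hq
  rw [← Real.sin_add_pi]
  congr 1
  push_cast
  linarith [show 2 * π * (j + q) / n = 2 * π * j / n + q * (2 * π / n) by ring]

theorem sin_arc_nonpos (hn : n = 2 * q) (hqj : q ≤ j) (hjn : j < n)
    (hφ : φ ∈ Icc 0 (2 * π / n)) :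
    Real.sin (φ + 2 * π * j / n) ≤ 0 := by
  obtain ⟨i, rfl⟩ := Nat.exists_eq_add_of_le' hqj
  rw [sin_arc_add_half hn (by omega), neg_nonpos]
  exact sin_arc_nonneg hn (by omega) hφ

theorem sin_arc_le_neg_sin (hn : n = 2 * q) (hj₁ : q + 1 ≤ j) (hj₂ : j + 2 ≤ n)
    (hφ : φ ∈ Icc 0 (2 * π / n)) :
    Real.sin (φ + 2 * π * j / n) ≤ -Real.sin (2 * π / n) := by
  obtain ⟨i, rfl⟩ := Nat.exists_eq_add_of_le' (le_of_add_le_left hj₁)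
  rw [sin_arc_add_half hn (by omega), neg_le_neg_iff]
  exact sin_le_sin_arc hn (by omega) (by omega) hφ

theorem norm_zf_arc_le_one (hn : n = 2 * q) (k : Fin n) {x : ℝ} (hx : x ∈ Icc 0 1) (hr : 0 ≤ r)
    (hφ : φ ∈ Icc 0 (2 * π / n)) :
    ‖zf n q k x (r * Complex.exp (Complex.I * φ))‖ ≤ 1 := by
  rw [zf]
  split_ifs with hk
  · rw [norm_yf_arc, Real.exp_le_one_iff, neg_nonpos, Int.cast_natCast]
    exact mul_nonneg (mul_nonneg hr hx.1) (sin_arc_nonneg hn hk hφ)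
  · rw [norm_yf_arc, Real.exp_le_one_iff, neg_nonpos, Int.cast_natCast]
    exact mul_nonneg_of_nonpos_of_nonpos (mul_nonpos_of_nonneg_of_nonpos hr (by linarith [hx.2]))
      (sin_arc_nonpos hn (not_lt.1 hk) k.isLt hφ)

theorem norm_uf_arc_le_of_lt (hn : n = 2 * q) {m : Fin n} (hm₁ : 1 ≤ (m : ℕ))
    (hm₂ : (m : ℕ) + 2 ≤ q) {ξ : ℝ} (hξ : ξ ∈ Icc 0 1) (hr : 0 ≤ r) (hφ : φ ∈ Icc 0 (2 * π / n)) :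
    ‖uf n q m ξ (r * Complex.exp (Complex.I * φ))‖
      ≤ Real.exp (-(r * Real.sin (2 * π / n) * (1 - ξ))) := by
  rw [uf, if_pos (by omega), norm_yf_arc, Real.exp_le_exp, neg_le_neg_iff, Int.cast_natCast,
    mul_right_comm]
  exact mul_le_mul_of_nonneg_left (sin_le_sin_arc hn hm₁ hm₂ hφ)
    (mul_nonneg hr (by linarith [hξ.2]))

theorem norm_uf_arc_le_of_gt (hn : n = 2 * q) {m : Fin n} (hm₁ : q + 1 ≤ (m : ℕ))
    (hm₂ : (m : ℕ) + 2 ≤ n) {ξ : ℝ} (hξ : ξ ∈ Icc 0 1) (hr : 0 ≤ r)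
    (hφ : φ ∈ Icc 0 (2 * π / n)) :
    ‖uf n q m ξ (r * Complex.exp (Complex.I * φ))‖
      ≤ Real.exp (-(r * Real.sin (2 * π / n) * ξ)) := by
  rw [uf, if_neg (by omega), norm_yf_arc, Real.exp_le_exp, Int.cast_natCast]
  have := mul_le_mul_of_nonneg_left (sin_arc_le_neg_sin hn hm₁ hm₂ hφ) (mul_nonneg hr hξ.1)
  linarith

theorem norm_contour_le {n : ℕ} {r B : ℝ} (hr : 0 ≤ r) {F : ℂ → ℂ}
    (hF : ∀ φ ∈ Icc 0 (2 * π / n), ‖F (r * Complex.exp (Complex.I * φ))‖ ≤ B) :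
    ‖contour n r F‖ ≤ 2 * π / n * (r * B) := by
  have hlen : 0 ≤ 2 * π / n := by positivity
  have h := intervalIntegral.norm_integral_le_of_norm_le_const (C := B * r) (a := 0)
    (b := 2 * π / n) (f := fun φ : ℝ =>
      F (r * Complex.exp (Complex.I * φ)) * (Complex.I * r * Complex.exp (Complex.I * φ)))
    fun φ hφ => by
      rw [uIoc_of_le hlen] at hφ
      rw [norm_mul, norm_mul, norm_mul, Complex.norm_I, Complex.norm_exp_I_mul_ofReal, one_mul,
        mul_one, Complex.norm_real, Real.norm_of_nonneg hr]
      exact mul_le_mul_of_nonneg_right (hF φ (Ioc_subset_Icc_self hφ)) hr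
  rw [sub_zero, abs_of_nonneg hlen] at h
  rw [contour]
  linarith

theorem tendsto_supOn_contour_zf_mul (hn : n = 2 * q) (k : Fin n) {u : ℝ → ℂ → ℂ}
    {w : ℝ → ℝ → ℝ} {f : ℝ → ℂ} (hf : ContinuousOn f (Icc 0 1)) (hw : ∀ r, Continuous (w r))
    (hu : ∀ r : ℝ, 0 ≤ r → ∀ φ ∈ Icc 0 (2 * π / n), ∀ ξ ∈ Icc 0 1,
      ‖u ξ (r * Complex.exp (Complex.I * φ))‖ ≤ w r ξ)
    (hlim : Tendsto (fun r : ℝ => r * ∫ ξ in (0:ℝ)..1, ‖f ξ‖ * w r ξ) atTop (𝓝 0)) :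
    Tendsto (fun r : ℝ => supOn (Icc 0 1) fun x =>
        contour n r fun ρ => zf n q k x ρ * ∫ ξ in (0:ℝ)..1, f ξ * u ξ ρ) atTop (𝓝 0) := by
  have hbound := hlim.const_mul (2 * π / n)
  rw [mul_zero] at hbound
  refine squeeze_zero' (Eventually.of_forall fun r => Real.iSup_nonneg fun _ => norm_nonneg _)
    ?_ hbound
  filter_upwards [eventually_ge_atTop 0] with r hr
  refine ciSup_le fun ⟨x, hx⟩ => norm_contour_le hr fun φ hφ => ?_
  have hinner : ‖∫ ξ in (0:ℝ)..1, f ξ * u ξ (r * Complex.exp (Complex.I * φ))‖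
      ≤ ∫ ξ in (0:ℝ)..1, ‖f ξ‖ * w r ξ := by
    refine intervalIntegral.norm_integral_le_of_norm_le zero_le_one
      (Eventually.of_forall fun ξ hξ => ?_)
      ((hf.norm.mul (hw r).continuousOn).intervalIntegrable_of_Icc zero_le_one)
    rw [norm_mul]
    exact mul_le_mul_of_nonneg_left (hu r hr φ hφ ξ (Ioc_subset_Icc_self hξ)) (norm_nonneg _)
  rw [norm_mul, ← one_mul (∫ ξ in (0:ℝ)..1, ‖f ξ‖ * w r ξ)]
  exact mul_le_mul (norm_zf_arc_le_one hn k hx hr hφ) hinner (norm_nonneg _) zero_le_one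

end Arc

theorem intermediate_terms_vanish_general
    (n q : ℕ) (hn : n = 2 * q)
    (k m : Fin n) (hm : (m : ℕ) ∉ ({0, q - 1, q, n - 1} : Set ℕ))
    (f : ℝ → ℂ)
    (hfcont : ContinuousOn f (Set.Icc 0 1))
    (hf0 : f 0 = 0) (hf1 : f 1 = 0) :
    Tendsto (fun r : ℝ =>
        supOn (Set.Icc 0 1) fun x =>
          contour n r fun ρ => zf n q k x ρ * ∫ ξ in (0:ℝ)..1, f ξ * uf n q m ξ ρ)
      atTop (nhds 0) := by
  simp only [mem_insert_iff, mem_singleton_iff, not_or] at hm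
  have hmn := m.isLt
  have hc : 0 < Real.sin (2 * π / n) := by
    have hn3 : (3 : ℝ) ≤ n := by exact_mod_cast (show 3 ≤ n by omega)
    apply Real.sin_pos_of_pos_of_lt_pi (by positivity)
    rw [div_lt_iff₀ (by positivity)]
    nlinarith [Real.pi_pos]
  rcases lt_or_ge (m : ℕ) q with hmq | hmq
  · exact tendsto_supOn_contour_zf_mul hn k hfcont (by fun_prop)
      (fun r hr φ hφ ξ hξ => norm_uf_arc_le_of_lt hn (by omega) (by omega) hξ hr hφ)
      (tendsto_mul_integral_norm_mul_exp_atTop hc hfcont hf1)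
  · exact tendsto_supOn_contour_zf_mul hn k hfcont (by fun_prop)
      (fun r hr φ hφ ξ hξ => norm_uf_arc_le_of_gt hn (by omega) (by omega) hξ hr hφ)
      (tendsto_mul_integral_norm_mul_exp_atTop' hc hfcont hf0)

/-- **Lemma 2.2 (vanishing of intermediate-index terms).** For `m ∉ {0, q−1, q, n−1}` and
`f ∈ C₀(0,1)`, `sup_{x∈[0,1]} |∫_{Γ_r} z_k(x,ρ)(∫₀¹ f(ξ)u_m(ξ,ρ) dξ) dρ| → 0` as `r → ∞`. -/
theorem intermediate_terms_vanish
    (n q : ℕ) (hn : n = 2 * q) (hq : 1 ≤ q)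
    (k m : Fin n) (hm : (m : ℕ) ∉ ({0, q - 1, q, n - 1} : Set ℕ))
    (f : ℝ → ℂ)
    (hfcont : ContinuousOn f (Set.Icc 0 1))
    (hf0 : f 0 = 0) (hf1 : f 1 = 0) :
    Tendsto (fun r : ℝ =>
        supOn (Set.Icc 0 1) fun x =>
          contour n r fun ρ => zf n q k x ρ * ∫ ξ in (0:ℝ)..1, f ξ * uf n q m ξ ρ)
      atTop (nhds 0) :=
  intermediate_terms_vanish_general n q hn k m hm f hfcont hf0 hf1

end Equi
end
end

section
/- Derivative estimate with a spectral parameter (Lemma 2.7, abstract form). For every integer n ≥ 1, every δ > 0 and every j ∈ {1,…,n} there exists a constant C > 0 such that for every n-times continuously differentiable function g : [0,δ] → ℂ and every real r ≥ 1: sup_{x∈[0,δ]} |g^{(j)}(x)| ≤ C·( r^j · sup_{x∈[0,δ]} |g(x)| + sup_{x∈[0,δ]} |g^{(n)}(x) − r^n g(x)| ). -/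
/-!
Each sup norm `M k` of `g⁽ᵏ⁾` on `[0, δ]` obeys Landau's inequality
`M (k + 1) ≤ 2 M k / h + h M (k + 2)` at every scale `2h ≤ δ`. Choosing `h` proportional to
`1 / t` shows that the weighted norms `6 ^ k ^ 2 M k / t ^ k` cannot peak at an interior `k`,
which gives the Kolmogorov-type interpolation `M j ≤ t ^ j M 0 + c M n / t ^ (n - j)` for all large
`t`. Taking `t` proportional to `r` and bounding `M n ≤ r ^ n M 0 + sup ‖g⁽ⁿ⁾ - r ^ n g‖` finishes.
-/

open Set

noncomputable def supNormOn {X E : Type*} [Norm E] (s : Set X) (f : X → E) : ℝ := ⨆ x : s, ‖f x‖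

section SupNorm

variable {X E : Type*} {s : Set X}

lemma supNormOn_nonneg [SeminormedAddGroup E] (f : X → E) : 0 ≤ supNormOn s f :=
  Real.iSup_nonneg fun _ => norm_nonneg _

lemma supNormOn_le [SeminormedAddGroup E] {f : X → E} {c : ℝ} (hc : 0 ≤ c)
    (h : ∀ x ∈ s, ‖f x‖ ≤ c) : supNormOn s f ≤ c :=
  Real.iSup_le (fun x => h x x.2) hc

lemma norm_le_supNormOn [TopologicalSpace X] [SeminormedAddGroup E] (hs : IsCompact s)
    {f : X → E} (hf : ContinuousOn f s) {x : X} (hx : x ∈ s) : ‖f x‖ ≤ supNormOn s f := by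
  have hbdd := (hs.image_of_continuousOn hf.norm).bddAbove
  rw [image_eq_range] at hbdd
  exact le_ciSup hbdd ⟨x, hx⟩

lemma supNormOn_le_mul_add_sub [TopologicalSpace X] {R : Type*} [SeminormedRing R]
    (hs : IsCompact s) {f g : X → R} (hf : ContinuousOn f s) (hg : ContinuousOn g s) (c : R) :
    supNormOn s f ≤ ‖c‖ * supNormOn s g + supNormOn s (fun x => f x - c * g x) := by
  refine supNormOn_le (add_nonneg (mul_nonneg (norm_nonneg c) (supNormOn_nonneg g))
    (supNormOn_nonneg _)) fun x hx => ?_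
  calc ‖f x‖ ≤ ‖c * g x‖ + ‖f x - c * g x‖ := norm_le_insert' _ _
    _ ≤ ‖c‖ * supNormOn s g + supNormOn s (fun x => f x - c * g x) := by
      gcongr
      · exact (norm_mul_le _ _).trans (by gcongr; exact norm_le_supNormOn hs hg hx)
      · exact norm_le_supNormOn hs (hf.sub (continuousOn_const.mul hg)) hx

end SupNorm

section Landau

variable {E : Type*} [NormedAddCommGroup E] [NormedSpace ℝ E] {a b : ℝ}

lemma exists_mem_Icc_abs_sub_eq {x h : ℝ} (hx : x ∈ Icc a b) (h0 : 0 ≤ h) (hh : 2 * h ≤ b - a) :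
    ∃ y ∈ Icc a b, |y - x| = h := by
  rcases le_or_gt (x + h) b with hxb | hxb
  · exact ⟨x + h, ⟨by linarith [hx.1], hxb⟩, by rw [add_sub_cancel_left, abs_of_nonneg h0]⟩
  · exact ⟨x - h, ⟨by linarith, by linarith [hx.2]⟩, by
      rw [sub_sub_cancel_left, abs_neg, abs_of_nonneg h0]⟩

/-- Landau's inequality on an interval, at scale `h`: compare `f` with its tangent line at `x`
over a point `y` at distance `h` from `x`. -/
lemma norm_deriv_le_of_hasDerivWithinAt_Icc {f f' f'' : ℝ → E}
    (hf : ∀ x ∈ Icc a b, HasDerivWithinAt f (f' x) (Icc a b) x)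
    (hf' : ∀ x ∈ Icc a b, HasDerivWithinAt f' (f'' x) (Icc a b) x)
    {M₀ M₂ : ℝ} (hM₀ : ∀ x ∈ Icc a b, ‖f x‖ ≤ M₀) (hM₂ : ∀ x ∈ Icc a b, ‖f'' x‖ ≤ M₂)
    {h : ℝ} (h0 : 0 < h) (hh : 2 * h ≤ b - a) {x : ℝ} (hx : x ∈ Icc a b) :
    ‖f' x‖ ≤ 2 * M₀ / h + h * M₂ := by
  obtain ⟨y, hy, hyx⟩ := exists_mem_Icc_abs_sub_eq hx h0.le hh
  have hseg : uIcc x y ⊆ Icc a b := uIcc_subset_Icc hx hy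
  have hf'_near : ∀ t ∈ uIcc x y, ‖f' t - f' x‖ ≤ M₂ * h := fun t ht => calc
    ‖f' t - f' x‖ ≤ M₂ * ‖t - x‖ :=
      (convex_Icc a b).norm_image_sub_le_of_norm_hasDerivWithin_le hf' hM₂ hx (hseg ht)
    _ ≤ M₂ * h := by
      gcongr
      · exact (norm_nonneg _).trans (hM₂ x hx)
      · exact hyx ▸ abs_sub_left_of_mem_uIcc ht
  set φ : ℝ → E := fun u => f u - u • f' x
  have hφ : ∀ t ∈ uIcc x y, HasDerivWithinAt φ (f' t - f' x) (uIcc x y) t := fun t ht => by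
    have := ((hf t (hseg ht)).mono hseg).sub ((hasDerivWithinAt_id t _).smul_const (f' x))
    rwa [one_smul] at this
  have hφ_le : ‖φ y - φ x‖ ≤ M₂ * h * h := by
    simpa [Real.norm_eq_abs, hyx] using
      (convex_uIcc x y).norm_image_sub_le_of_norm_hasDerivWithin_le hφ hf'_near left_mem_uIcc
        right_mem_uIcc
  have key : h * ‖f' x‖ ≤ 2 * M₀ + h * h * M₂ := calc
    h * ‖f' x‖ = ‖(f y - f x) - (φ y - φ x)‖ := by
      rw [← hyx, ← Real.norm_eq_abs, ← norm_smul]; congr 1; simp only [φ, sub_smul]; abel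
    _ ≤ ‖f y‖ + ‖f x‖ + M₂ * h * h :=
      (norm_sub_le _ _).trans (add_le_add (norm_sub_le _ _) hφ_le)
    _ ≤ 2 * M₀ + h * h * M₂ := by linarith [hM₀ y hy, hM₀ x hx]
  rw [div_add' _ _ _ h0.ne', le_div_iff₀ h0]
  linarith

end Landau

open Finset in
lemma le_max_of_le_mul_add_mul {F : ℕ → ℝ} (hF₀ : 0 ≤ F 0) {a b : ℝ} (ha : 0 ≤ a)
    (hb : 0 ≤ b) (hab : a + b < 1) {n : ℕ}
    (hrec : ∀ m, m + 2 ≤ n → F (m + 1) ≤ a * F m + b * F (m + 2)) {k : ℕ} (hk : k ≤ n) :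
    F k ≤ max (F 0) (F n) := by
  obtain ⟨k₀, hk₀, hmax⟩ := exists_max_image (range (n + 1)) F nonempty_range_add_one
  have hmax' : ∀ k ≤ n, F k ≤ F k₀ := fun k hk => hmax k (mem_range.2 (by omega))
  refine (hmax' k hk).trans ?_
  rcases Nat.lt_or_ge k₀ n with hk₀n | hk₀n
  · rcases k₀ with _ | m
    · exact le_max_left _ _
    · have : F (m + 1) ≤ (a + b) * F (m + 1) := calc
        F (m + 1) ≤ a * F m + b * F (m + 2) := hrec m hk₀n
        _ ≤ a * F (m + 1) + b * F (m + 1) := by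
          gcongr
          · exact hmax' m (by omega)
          · exact hmax' (m + 2) hk₀n
        _ = (a + b) * F (m + 1) := by ring
      nlinarith [le_max_left (F 0) (F n)]
  · obtain rfl : k₀ = n := by have := mem_range.1 hk₀; omega
    exact le_max_right _ _

def SatisfiesLandau (M : ℕ → ℝ) (n : ℕ) (L : ℝ) : Prop :=
  ∀ k, k + 2 ≤ n → ∀ h, 0 < h → 2 * h ≤ L → M (k + 1) ≤ 2 * M k / h + h * M (k + 2)

namespace SatisfiesLandau

variable {M : ℕ → ℝ} {n : ℕ} {L : ℝ}

lemma weighted_succ_le (hL : SatisfiesLandau M n L) {t : ℝ} (ht : 0 < t)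
    (htL : 2 * 36 ^ n ≤ t * L) {m : ℕ} (hm : m + 2 ≤ n) :
    6 ^ (m + 1) ^ 2 * M (m + 1) / t ^ (m + 1) ≤
      1 / 3 * (6 ^ m ^ 2 * M m / t ^ m) + 1 / 6 * (6 ^ (m + 2) ^ 2 * M (m + 2) / t ^ (m + 2)) := by
  set P : ℝ := 6 ^ m ^ 2
  set u : ℝ := 6 ^ m
  have hu : 0 < u := by positivity
  have hP : 0 < P := by positivity
  have h36 : (36 : ℝ) ^ (m + 1) = u ^ 2 * 36 := by
    rw [pow_succ, show (36 : ℝ) = 6 ^ 2 by norm_num, ← pow_mul, ← pow_mul']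
  have h6₁ : (6 : ℝ) ^ (m + 1) ^ 2 = P * u ^ 2 * 6 := by
    rw [show (m + 1) ^ 2 = m ^ 2 + m * 2 + 1 by ring, pow_add, pow_add, pow_mul, pow_one]
  have h6₂ : (6 : ℝ) ^ (m + 2) ^ 2 = P * u ^ 4 * 6 ^ 4 := by
    rw [show (m + 2) ^ 2 = m ^ 2 + m * 4 + 4 by ring, pow_add, pow_add, pow_mul]
  -- the scale `h = 36^(m+1)/t` balances the two terms of the Landau inequality
  have hh : 0 < u ^ 2 * 36 / t := by positivity
  have hhL : 2 * (u ^ 2 * 36 / t) ≤ L := by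
    rw [← h36, mul_div_assoc', div_le_iff₀ ht, mul_comm L]
    exact le_trans (by gcongr <;> norm_num; omega) htL
  have step := hL m hm _ hh hhL
  rw [h6₁, h6₂, pow_succ t m, pow_add t m 2]
  calc P * u ^ 2 * 6 * M (m + 1) / (t ^ m * t)
      ≤ P * u ^ 2 * 6 * (2 * M m / (u ^ 2 * 36 / t) + u ^ 2 * 36 / t * M (m + 2)) /
          (t ^ m * t) := by
        gcongr
    _ = 1 / 3 * (P * M m / t ^ m) + 1 / 6 * (P * u ^ 4 * 6 ^ 4 * M (m + 2) / (t ^ m * t ^ 2)) := by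
        field_simp
        ring

/-- Kolmogorov-type interpolation at frequency `t`: the weights `6 ^ k ^ 2 / t ^ k` turn the
Landau inequalities into `F (m + 1) ≤ F m / 3 + F (m + 2) / 6`, so the weighted sequence `F`
is maximal at an endpoint. -/
lemma le_pow_mul_add (hL : SatisfiesLandau M n L) (hM : ∀ k, 0 ≤ M k) {t : ℝ} (ht : 0 < t)
    (htL : 2 * 36 ^ n ≤ t * L) {j : ℕ} (hj : j ≤ n) :
    M j ≤ t ^ j * M 0 + 6 ^ n ^ 2 * M n / t ^ (n - j) := by
  set F : ℕ → ℝ := fun k => 6 ^ k ^ 2 * M k / t ^ k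
  have hF : F j ≤ M 0 + 6 ^ n ^ 2 * M n / t ^ n := by
    refine (le_max_of_le_mul_add_mul (by positivity [hM 0]) (by norm_num) (by norm_num)
      (by norm_num) (fun m hm => hL.weighted_succ_le ht htL hm) hj).trans ?_
    refine (max_le_add_of_nonneg (by positivity [hM 0]) (by positivity [hM n])).trans_eq ?_
    simp [F, mul_div_assoc]
  have htj : t ^ n = t ^ j * t ^ (n - j) := by rw [← pow_add, Nat.add_sub_cancel' hj]
  calc M j ≤ 6 ^ j ^ 2 * M j := le_mul_of_one_le_left (hM j) (one_le_pow₀ (by norm_num))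
    _ = t ^ j * F j := by simp only [F]; field_simp
    _ ≤ t ^ j * (M 0 + 6 ^ n ^ 2 * M n / t ^ n) := by gcongr
    _ = t ^ j * M 0 + 6 ^ n ^ 2 * M n / t ^ (n - j) := by rw [htj]; field_simp

lemma le_mul_pow_mul_add (hL : SatisfiesLandau M n L) (hM : ∀ k, 0 ≤ M k) (hL₀ : 0 < L)
    {r E : ℝ} (hr : 1 ≤ r) (hE : 0 ≤ E) (hMn : M n ≤ r ^ n * M 0 + E) {j : ℕ} (hj : j ≤ n) :
    M j ≤ (max 1 (2 * 36 ^ n / L) ^ n + 6 ^ n ^ 2) * (r ^ j * M 0 + E) := by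
  set K : ℝ := max 1 (2 * 36 ^ n / L)
  have hK : 1 ≤ K := le_max_left _ _
  have hKr : 2 * 36 ^ n ≤ K * r * L := calc
    (2 : ℝ) * 36 ^ n ≤ K * L := (div_le_iff₀ hL₀).1 (le_max_right _ _)
    _ ≤ K * r * L := by gcongr; nlinarith
  have hMn' : M n / (K * r) ^ (n - j) ≤ r ^ j * M 0 + E := calc
    M n / (K * r) ^ (n - j) ≤ (r ^ n * M 0 + E) / r ^ (n - j) :=
      div_le_div₀ (by positivity [hM 0]) hMn (by positivity)
        (pow_le_pow_left₀ (by positivity) (le_mul_of_one_le_left (by positivity) hK) _)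
    _ = r ^ j * M 0 + E / r ^ (n - j) := by
      rw [← Nat.add_sub_cancel' hj, pow_add, Nat.add_sub_cancel_left]; field_simp
    _ ≤ r ^ j * M 0 + E := by gcongr; exact div_le_self hE (one_le_pow₀ hr)
  calc M j ≤ (K * r) ^ j * M 0 + 6 ^ n ^ 2 * M n / (K * r) ^ (n - j) :=
        hL.le_pow_mul_add hM (by positivity) hKr hj
    _ ≤ K ^ n * (r ^ j * M 0) + 6 ^ n ^ 2 * (r ^ j * M 0 + E) := by
      rw [mul_div_assoc, mul_pow, mul_assoc]
      gcongr
      positivity [hM 0]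
    _ ≤ (K ^ n + 6 ^ n ^ 2) * (r ^ j * M 0 + E) := by
      nlinarith [pow_pos (zero_lt_one.trans_le hK) n]

end SatisfiesLandau

section IteratedDeriv

variable {E : Type*} [NormedAddCommGroup E] [NormedSpace ℝ E] {n : ℕ} {s : Set ℝ} {g : ℝ → E}

lemma ContDiffOn.hasDerivWithinAt_iteratedDerivWithin (hg : ContDiffOn ℝ n g s)
    (hs : UniqueDiffOn ℝ s) {k : ℕ} (hk : k < n) {x : ℝ} (hx : x ∈ s) :
    HasDerivWithinAt (iteratedDerivWithin k g s) (iteratedDerivWithin (k + 1) g s x) s x := by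
  rw [iteratedDerivWithin_succ]
  exact (hg.differentiableOn_iteratedDerivWithin (by exact_mod_cast hk) hs x hx).hasDerivWithinAt

lemma ContDiffOn.satisfiesLandau_supNormOn_iteratedDerivWithin {a b : ℝ} (hab : a < b)
    (hg : ContDiffOn ℝ n g (Icc a b)) :
    SatisfiesLandau (fun k => supNormOn (Icc a b) (iteratedDerivWithin k g (Icc a b))) n
      (b - a) := by
  have hs := uniqueDiffOn_Icc hab
  have hbound : ∀ k ≤ n, ∀ x ∈ Icc a b, ‖iteratedDerivWithin k g (Icc a b) x‖ ≤
      supNormOn (Icc a b) (iteratedDerivWithin k g (Icc a b)) :=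
    fun k hk x hx => norm_le_supNormOn isCompact_Icc
      (hg.continuousOn_iteratedDerivWithin (by exact_mod_cast hk) hs) hx
  have hM (k : ℕ) : 0 ≤ supNormOn (Icc a b) (iteratedDerivWithin k g (Icc a b)) :=
    supNormOn_nonneg _
  intro k hk h h0 hh
  refine supNormOn_le (by positivity [hM k, hM (k + 2)]) fun x hx => ?_
  exact norm_deriv_le_of_hasDerivWithinAt_Icc
    (fun y hy => hg.hasDerivWithinAt_iteratedDerivWithin hs (by omega) hy)
    (fun y hy => hg.hasDerivWithinAt_iteratedDerivWithin hs (by omega) hy)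
    (hbound k (by omega)) (hbound (k + 2) hk) h0 hh hx

end IteratedDeriv

theorem derivative_estimate_with_parameter_general
    (n : ℕ) (δ : ℝ) (hδ : 0 < δ) (j : ℕ) (hj₂ : j ≤ n) :
    ∃ C : ℝ, 0 < C ∧
      ∀ g : ℝ → ℂ, ContDiffOn ℝ n g (Set.Icc 0 δ) →
        ∀ r : ℝ, 1 ≤ r →
          (⨆ x : Set.Icc (0:ℝ) δ, ‖iteratedDerivWithin j g (Set.Icc 0 δ) x.val‖) ≤
            C * (r ^ j * (⨆ x : Set.Icc (0:ℝ) δ, ‖g x.val‖) +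
              ⨆ x : Set.Icc (0:ℝ) δ,
                ‖iteratedDerivWithin n g (Set.Icc 0 δ) x.val - (r : ℂ) ^ n * g x.val‖) := by
  refine ⟨max 1 (2 * 36 ^ n / δ) ^ n + 6 ^ n ^ 2, by positivity, fun g hg r hr => ?_⟩
  set M : ℕ → ℝ := fun k => supNormOn (Icc 0 δ) (iteratedDerivWithin k g (Icc 0 δ))
  set E := supNormOn (Icc 0 δ) fun x => iteratedDerivWithin n g (Icc 0 δ) x - (r : ℂ) ^ n * g x
  change M j ≤ _ * (r ^ j * supNormOn (Icc 0 δ) g + E)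
  have hs := uniqueDiffOn_Icc hδ
  have hM₀ : M 0 = supNormOn (Icc 0 δ) g := by simp only [M, iteratedDerivWithin_zero]
  have hMn : M n ≤ r ^ n * M 0 + E := by
    have := supNormOn_le_mul_add_sub isCompact_Icc
      (hg.continuousOn_iteratedDerivWithin le_rfl hs) hg.continuousOn ((r : ℂ) ^ n)
    simpa [hM₀, abs_of_nonneg (zero_le_one.trans hr)] using this
  have hLandau := hg.satisfiesLandau_supNormOn_iteratedDerivWithin hδ
  rw [sub_zero] at hLandau
  rw [← hM₀]
  exact hLandau.le_mul_pow_mul_add (fun k => supNormOn_nonneg _) hδ hr (supNormOn_nonneg _) hMn hj₂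

/-- **Lemma 2.7 (abstract form): derivative estimate with a spectral parameter.**
For `n ≥ 1`, `δ > 0`, `1 ≤ j ≤ n` there is `C > 0` such that for every `n`-times
continuously differentiable `g : [0,δ] → ℂ` and every `r ≥ 1`:
`sup |g^{(j)}| ≤ C(r^j sup|g| + sup|g^{(n)} − r^n g|)` on `[0,δ]`. -/
theorem derivative_estimate_with_parameter
    (n : ℕ) (hn : 1 ≤ n) (δ : ℝ) (hδ : 0 < δ) (j : ℕ) (hj₁ : 1 ≤ j) (hj₂ : j ≤ n) :
    ∃ C : ℝ, 0 < C ∧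
      ∀ g : ℝ → ℂ, ContDiffOn ℝ n g (Set.Icc 0 δ) →
        ∀ r : ℝ, 1 ≤ r →
          (⨆ x : Set.Icc (0:ℝ) δ, ‖iteratedDerivWithin j g (Set.Icc 0 δ) x.val‖) ≤
            C * (r ^ j * (⨆ x : Set.Icc (0:ℝ) δ, ‖g x.val‖) +
              ⨆ x : Set.Icc (0:ℝ) δ,
                ‖iteratedDerivWithin n g (Set.Icc 0 δ) x.val - (r : ℂ) ^ n * g x.val‖) :=
  derivative_estimate_with_parameter_general n δ hδ j hj₂
end

section
/- Uniform commutator bound (key estimate in the proof of the commutator lemma). Let c, g : ℤ → ℂ with c bounded and Σ_{p∈ℤ} |p|·|g(p)| < ∞. Then for every natural number N: Σ over all pairs (l,k) ∈ ℤ×ℤ with |l| ≤ N < |k| of |c(k)|·|g(l−k)| is at most (sup_{k∈ℤ} |c(k)|) · Σ_{p∈ℤ} |p|·|g(p)|, and the same bound holds for the sum over all pairs (l,k) with |k| ≤ N < |l|. -/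
open scoped ENNReal


lemma fib1 (N : ℕ) (p : ℤ) : ∃ I : Finset ℤ, I.card ≤ p.natAbs ∧
    ∀ k : ℤ, |p + k| ≤ (N : ℤ) → (N : ℤ) < |k| → k ∈ I := by
  refine ⟨if 0 ≤ p then Finset.Icc (-(N:ℤ) - p) (-(N:ℤ) - 1) else Finset.Icc ((N:ℤ)+1) ((N:ℤ)-p), ?_, ?_⟩
  · split_ifs with h <;> rw [Int.card_Icc] <;> omega
  · intro k hk1 hk2
    rw [abs_le] at hk1
    rcases lt_abs.mp hk2 with h | h <;> split_ifs with hp <;> rw [Finset.mem_Icc] <;> omega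

lemma fib2 (N : ℕ) (p : ℤ) : ∃ I : Finset ℤ, I.card ≤ p.natAbs ∧
    ∀ k : ℤ, |k| ≤ (N : ℤ) → (N : ℤ) < |p + k| → k ∈ I := by
  refine ⟨if 0 ≤ p then Finset.Icc ((N:ℤ)-p+1) (N:ℤ) else Finset.Icc (-(N:ℤ)) (-(N:ℤ)-p-1), ?_, ?_⟩
  · split_ifs with h <;> rw [Int.card_Icc] <;> omega
  · intro k hk1 hk2
    rw [abs_le] at hk1
    rcases lt_abs.mp hk2 with h | h <;> split_ifs with hp <;> rw [Finset.mem_Icc] <;> omega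

lemma count_bound (M : ℝ≥0∞) (e : ℤ → ℝ≥0∞) (P : ℤ × ℤ → Prop)
    (hP : ∀ p : ℤ, ∃ I : Finset ℤ, I.card ≤ p.natAbs ∧ ∀ k, P (p + k, k) → k ∈ I) :
    (∑' x : {x : ℤ × ℤ // P x}, M * e (x.val.1 - x.val.2)) ≤
      M * ∑' p : ℤ, (p.natAbs : ℝ≥0∞) * e p := by
  classical
  set F : ℤ × ℤ → ℝ≥0∞ := fun q =>
    Set.indicator {q : ℤ × ℤ | P (q.1 + q.2, q.2)} (fun q => M * e q.1) q with hF
  have hφ : Function.Injective (fun x : {x : ℤ × ℤ // P x} => (x.val.1 - x.val.2, x.val.2)) := by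
    intro a b hab
    simp only [Prod.mk.injEq] at hab
    ext
    · omega
    · exact hab.2
  have h1 : (∑' x : {x : ℤ × ℤ // P x}, M * e (x.val.1 - x.val.2)) ≤ ∑' q : ℤ × ℤ, F q := by
    have := ENNReal.tsum_comp_le_tsum_of_injective hφ F
    refine le_trans (le_of_eq ?_) this
    refine tsum_congr fun x => ?_
    have hmem : ((x.val.1 - x.val.2, x.val.2) : ℤ × ℤ) ∈ {q : ℤ × ℤ | P (q.1 + q.2, q.2)} := by
      have := x.property
      simp only [Set.mem_setOf_eq]
      simpa using this
    simp [hF, Set.indicator_of_mem hmem]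
  refine h1.trans ?_
  rw [ENNReal.tsum_prod']
  have h2 : ∀ p : ℤ, (∑' k : ℤ, F (p, k)) ≤ (p.natAbs : ℝ≥0∞) * (M * e p) := by
    intro p
    obtain ⟨I, hIcard, hI⟩ := hP p
    have hsub : {k : ℤ | P (p + k, k)} ⊆ (I : Set ℤ) := fun k hk => hI k hk
    have hFk : ∀ k : ℤ, F (p, k) = Set.indicator {k : ℤ | P (p + k, k)} (fun _ => M * e p) k := by
      intro k
      by_cases h : P (p + k, k)
      · simp [hF, Set.indicator_apply, h]
      · simp [hF, Set.indicator_apply, h]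
    have hstep : (∑' k : ℤ, F (p, k)) = ∑' k : {k : ℤ | P (p + k, k)}, M * e p := by
      rw [tsum_congr hFk, ← tsum_subtype]
    rw [hstep]
    have hinj : Function.Injective (Set.inclusion hsub) := Set.inclusion_injective hsub
    calc (∑' k : {k : ℤ | P (p + k, k)}, M * e p)
        ≤ ∑' _ : (I : Set ℤ), M * e p :=
          ENNReal.tsum_comp_le_tsum_of_injective hinj (fun _ => M * e p)
      _ = ∑ _k ∈ I, M * e p := I.tsum_subtype (fun _ => M * e p)
      _ = I.card * (M * e p) := by simp [Finset.sum_const, nsmul_eq_mul]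
      _ ≤ (p.natAbs : ℝ≥0∞) * (M * e p) :=
          mul_le_mul_left (by exact_mod_cast hIcard) _
  calc (∑' p : ℤ, ∑' k : ℤ, F (p, k)) ≤ ∑' p : ℤ, (p.natAbs : ℝ≥0∞) * (M * e p) :=
        ENNReal.tsum_le_tsum h2
    _ = M * ∑' p : ℤ, (p.natAbs : ℝ≥0∞) * e p := by
        rw [← ENNReal.tsum_mul_left]
        refine tsum_congr fun p => by ring

/-- **Uniform commutator bound.** For bounded `c : ℤ → ℂ` and `g : ℤ → ℂ` with
`Σ_p |p|·|g(p)| < ∞`, for every `N`: the sum of `|c(k)|·|g(l−k)|` over all pairs `(l,k)`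
with `|l| ≤ N < |k|` is at most `(sup_k |c(k)|)·Σ_p |p|·|g(p)|`, and likewise for the sum
over all pairs with `|k| ≤ N < |l|` (sums taken in the extended nonnegative reals). -/
theorem uniform_commutator_bound
    (c g : ℤ → ℂ)
    (hc : BddAbove (Set.range fun k : ℤ => ‖c k‖))
    (hg : Summable (fun p : ℤ => (|p| : ℝ) * ‖g p‖)) (N : ℕ) :
    (∑' lk : {lk : ℤ × ℤ // |lk.1| ≤ (N : ℤ) ∧ (N : ℤ) < |lk.2|},
        ENNReal.ofReal (‖c lk.val.2‖ * ‖g (lk.val.1 - lk.val.2)‖)) ≤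
      ENNReal.ofReal ((⨆ k : ℤ, ‖c k‖) * ∑' p : ℤ, (|p| : ℝ) * ‖g p‖) ∧
    (∑' lk : {lk : ℤ × ℤ // |lk.2| ≤ (N : ℤ) ∧ (N : ℤ) < |lk.1|},
        ENNReal.ofReal (‖c lk.val.2‖ * ‖g (lk.val.1 - lk.val.2)‖)) ≤
      ENNReal.ofReal ((⨆ k : ℤ, ‖c k‖) * ∑' p : ℤ, (|p| : ℝ) * ‖g p‖) := by
  set M : ℝ := ⨆ k : ℤ, ‖c k‖ with hMdef
  have hck : ∀ k : ℤ, ‖c k‖ ≤ M := fun k => le_ciSup hc k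
  have hM0 : 0 ≤ M := (norm_nonneg (c 0)).trans (hck 0)
  -- rewrite RHS
  have hterm : ∀ p : ℤ, (p.natAbs : ℝ≥0∞) * ENNReal.ofReal ‖g p‖
      = ENNReal.ofReal ((|p| : ℝ) * ‖g p‖) := by
    intro p
    rw [ENNReal.ofReal_mul (abs_nonneg _)]
    congr 1
    have habs : |(p : ℝ)| = ((p.natAbs : ℕ) : ℝ) := by
      rw [Nat.cast_natAbs, Int.cast_abs]
    rw [habs, ENNReal.ofReal_natCast]
  have hRHS : ENNReal.ofReal (M * ∑' p : ℤ, (|p| : ℝ) * ‖g p‖)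
      = ENNReal.ofReal M * ∑' p : ℤ, (p.natAbs : ℝ≥0∞) * ENNReal.ofReal ‖g p‖ := by
    rw [ENNReal.ofReal_mul hM0, ENNReal.ofReal_tsum_of_nonneg
      (fun p => mul_nonneg (abs_nonneg _) (norm_nonneg _)) hg]
    exact congrArg _ (tsum_congr fun p => (hterm p).symm)
  have key : ∀ P : ℤ × ℤ → Prop,
      (∀ p : ℤ, ∃ I : Finset ℤ, I.card ≤ p.natAbs ∧ ∀ k, P (p + k, k) → k ∈ I) →
      (∑' x : {x : ℤ × ℤ // P x},
          ENNReal.ofReal (‖c x.val.2‖ * ‖g (x.val.1 - x.val.2)‖)) ≤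
        ENNReal.ofReal (M * ∑' p : ℤ, (|p| : ℝ) * ‖g p‖) := by
    intro P hP
    rw [hRHS]
    refine le_trans (ENNReal.tsum_le_tsum (fun x => ?_))
      (count_bound (ENNReal.ofReal M) (fun p => ENNReal.ofReal ‖g p‖) P hP)
    rw [ENNReal.ofReal_mul (norm_nonneg _)]
    exact mul_le_mul_left (ENNReal.ofReal_le_ofReal (hck _)) _
  constructor
  · refine key _ (fun p => ?_)
    obtain ⟨I, hI1, hI2⟩ := fib1 N p
    exact ⟨I, hI1, fun k hk => hI2 k hk.1 hk.2⟩
  · refine key _ (fun p => ?_)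
    obtain ⟨I, hI1, hI2⟩ := fib2 N p
    exact ⟨I, hI1, fun k hk => hI2 k hk.1 hk.2⟩
end
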